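/- arXiv:0912.1255 — 2 statements merged into one kernel-verified Lean document; each statement's English description precedes it below -/
import Mathlib

section
/- For λ(t) = (1+t)^ℓ with ℓ > 0, the dissipation coefficient 2b(t) = λ'(Λ⁻¹(1+t))/λ²(Λ⁻¹(1+t)) arising from the Liouville-type change of variables satisfies 2b(t) ~ (ℓ/(ℓ+1)) · 1/(1+t) as t → ∞, i.e. lim_{t→∞} (1+t)·2b(t) = ℓ/(ℓ+1). -/
open Real MeasureTheory Filter

/-! With `λ(t) = (1+t)^ℓ` everything is explicit: `Λ(t) = 1 + ((1+t)^(ℓ+1) - 1)/(ℓ+1)`, so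
`v := 1 + Λ⁻¹(1+t)` satisfies `v^(ℓ+1) = (ℓ+1)t + 1`, while `λ'/λ²` evaluated at `v - 1` is
`ℓ v^(ℓ-1) / v^(2ℓ) = ℓ / v^(ℓ+1)`. Hence `(1+t)·2b(t) = ℓ(1+t)/((ℓ+1)t + 1) → ℓ/(ℓ+1)`. -/

theorem integral_one_add_rpow {ℓ : ℝ} (hℓ : -1 < ℓ) (t : ℝ) :
    ∫ s in (0 : ℝ)..t, (1 + s) ^ ℓ = ((1 + t) ^ (ℓ + 1) - 1) / (ℓ + 1) := by
  rw [intervalIntegral.integral_comp_add_left (fun x : ℝ => x ^ ℓ) 1, add_zero,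
    integral_rpow (Or.inl hℓ), one_rpow]

theorem deriv_one_add_rpow_div_sq (ℓ : ℝ) {x : ℝ} (hx : 0 < 1 + x) :
    deriv (fun y : ℝ => (1 + y) ^ ℓ) x / ((1 + x) ^ ℓ) ^ 2 = ℓ / (1 + x) ^ (ℓ + 1) := by
  have hderiv : HasDerivAt (fun y : ℝ => (1 + y) ^ ℓ) (ℓ * (1 + x) ^ (ℓ - 1)) x := by
    simpa using ((hasDerivAt_id x).const_add 1).rpow_const (p := ℓ) (Or.inl hx.ne')
  rw [hderiv.deriv, ← rpow_natCast, ← rpow_mul hx.le, mul_div_assoc, ← rpow_sub hx,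
    div_eq_mul_inv ℓ, ← rpow_neg hx.le]
  ring_nf

theorem inverse_eq_of_eq_one_add_div {ℓ : ℝ} (hℓ : -1 < ℓ) {Lam Laminv : ℝ → ℝ}
    (hLam : ∀ t, Lam t = 1 + ((1 + t) ^ (ℓ + 1) - 1) / (ℓ + 1))
    (hinv : ∀ t, 0 ≤ t → Laminv (Lam t) = t) {t : ℝ} (ht : 0 ≤ t) :
    Laminv (1 + t) = ((ℓ + 1) * t + 1) ^ (ℓ + 1)⁻¹ - 1 := by
  have hk : 0 < ℓ + 1 := by linarith
  have hA : 1 ≤ (ℓ + 1) * t + 1 := by nlinarith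
  have hu : 0 ≤ ((ℓ + 1) * t + 1) ^ (ℓ + 1)⁻¹ - 1 :=
    sub_nonneg.2 (one_le_rpow hA (inv_nonneg.2 hk.le))
  have hLu : Lam (((ℓ + 1) * t + 1) ^ (ℓ + 1)⁻¹ - 1) = 1 + t := by
    rw [hLam, add_sub_cancel, rpow_inv_rpow (by linarith) hk.ne']
    field_simp
    ring
  rw [← hLu, hinv _ hu]

theorem tendsto_one_add_mul_div_mul_add_one (c : ℝ) {a : ℝ} (ha : a ≠ 0) :
    Tendsto (fun t : ℝ => (1 + t) * (c / (a * t + 1))) atTop (nhds (c / a)) := by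
  have hlim : Tendsto (fun t : ℝ => c * (t⁻¹ + 1) / (a + t⁻¹)) atTop
      (nhds (c * (0 + 1) / (a + 0))) :=
    ((tendsto_inv_atTop_zero.add_const 1).const_mul c).div
      (tendsto_inv_atTop_zero.const_add a) (by simpa using ha)
  rw [zero_add, mul_one, add_zero] at hlim
  refine hlim.congr' ?_
  filter_upwards [eventually_gt_atTop 0, eventually_ne_atTop (-a⁻¹)] with t ht hta
  have hat : a * t + 1 ≠ 0 := by
    contrapose! hta
    field_simp
    linarith
  field_simp

theorem stmt_6_general (ℓ : ℝ) (hℓ : 0 < ℓ)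
    (lam Lam Laminv : ℝ → ℝ)
    (hlam : ∀ t : ℝ, lam t = (1 + t) ^ ℓ)
    (hLam : ∀ t : ℝ, Lam t = 1 + ∫ s in (0 : ℝ)..t, lam s)
    (hinv₁ : ∀ t : ℝ, 0 ≤ t → Laminv (Lam t) = t) :
    Tendsto
      (fun t : ℝ =>
        (1 + t) * (deriv lam (Laminv (1 + t)) / (lam (Laminv (1 + t))) ^ 2))
      atTop (nhds (ℓ / (ℓ + 1))) := by
  have hℓ' : -1 < ℓ := by linarith
  have hlam' : lam = fun t : ℝ => (1 + t) ^ ℓ := funext hlam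
  have hLam' : ∀ t, Lam t = 1 + ((1 + t) ^ (ℓ + 1) - 1) / (ℓ + 1) := fun t => by
    rw [hLam, hlam', integral_one_add_rpow hℓ']
  refine (tendsto_one_add_mul_div_mul_add_one ℓ (by linarith : ℓ + 1 ≠ 0)).congr' ?_
  filter_upwards [eventually_ge_atTop 0] with t ht
  have hv : 1 + Laminv (1 + t) = ((ℓ + 1) * t + 1) ^ (ℓ + 1)⁻¹ := by
    rw [inverse_eq_of_eq_one_add_div hℓ' hLam' hinv₁ ht]
    ring
  have hA : 0 < (ℓ + 1) * t + 1 := by nlinarith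
  simp only [hlam']
  rw [deriv_one_add_rpow_div_sq ℓ (hv ▸ rpow_pos_of_pos hA _), hv,
    rpow_inv_rpow hA.le (by linarith)]

/-- For `λ(t) = (1+t)^ℓ`, the dissipation coefficient coming from the Liouville
change of variables satisfies `2b(t) ∼ (ℓ/(ℓ+1))/(1+t)` as `t → ∞`. -/
theorem stmt_6 (ℓ : ℝ) (hℓ : 0 < ℓ)
    (lam Lam Laminv : ℝ → ℝ)
    (hlam : ∀ t : ℝ, lam t = (1 + t) ^ ℓ)
    (hLam : ∀ t : ℝ, Lam t = 1 + ∫ s in (0 : ℝ)..t, lam s)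
    (hinv₁ : ∀ t : ℝ, 0 ≤ t → Laminv (Lam t) = t)
    (hinv₂ : ∀ s : ℝ, 1 ≤ s → Lam (Laminv s) = s) :
    Tendsto
      (fun t : ℝ =>
        (1 + t) * (deriv lam (Laminv (1 + t)) / (lam (Laminv (1 + t))) ^ 2))
      atTop (nhds (ℓ / (ℓ + 1))) :=
  stmt_6_general ℓ hℓ lam Lam Laminv hlam hLam hinv₁
end

section
/- Let μ(t) = μ₀/(1+t) with μ₀ > 0 and σ(t) = μ(t)·sin(t^α) with 0 < α < 1. Then sup_{t>0} |∫₀ᵗ σ(s) ds| < ∞. -/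
/-!
On `[1, t]` write `sin (s ^ α) / (1 + s) = w s * F' s` with `w s = s ^ (1 - α) / (1 + s)` and
`F s = -cos (s ^ α) / α`. Integrating by parts, the boundary terms are bounded because `|w| ≤ 1`
and `|F| ≤ 1 / α`, and the remaining integral is bounded because `|w' s| = O(s ^ (-1 - α))` is
integrable at infinity. On `[0, 1]` the integrand is bounded by `1`.
-/

open Real MeasureTheory Set intervalIntegral

theorem abs_integral_mul_deriv_le {a b C : ℝ} {u u' v v' : ℝ → ℝ} (hab : a ≤ b)
    (hu : ∀ x ∈ Icc a b, HasDerivAt u (u' x) x) (hv : ∀ x ∈ Icc a b, HasDerivAt v (v' x) x)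
    (hu' : IntervalIntegrable u' volume a b) (hv' : IntervalIntegrable v' volume a b)
    (hvC : ∀ x ∈ Icc a b, |v x| ≤ C) :
    |∫ x in a..b, u x * v' x| ≤ C * (|u a| + |u b| + ∫ x in a..b, |u' x|) := by
  rw [← uIcc_of_le hab] at hu hv
  have hrest : |∫ x in a..b, u' x * v x| ≤ C * ∫ x in a..b, |u' x| := by
    rw [← intervalIntegral.integral_const_mul, ← Real.norm_eq_abs]
    refine norm_integral_le_of_norm_le hab (ae_of_all _ fun x hx => ?_) (hu'.abs.const_mul C)
    rw [Real.norm_eq_abs, abs_mul, mul_comm]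
    exact mul_le_mul_of_nonneg_right (hvC x (Ioc_subset_Icc_self hx)) (abs_nonneg _)
  have hva := hvC a (left_mem_Icc.2 hab)
  have hvb := hvC b (right_mem_Icc.2 hab)
  have hboundary : |u b * v b - u a * v a| ≤ C * (|u a| + |u b|) := by
    refine (abs_sub _ _).trans ?_
    rw [abs_mul, abs_mul]
    nlinarith [abs_nonneg (u a), abs_nonneg (u b)]
  rw [integral_mul_deriv_eq_deriv_mul hu hv hu' hv']
  linarith [abs_sub (u b * v b - u a * v a) (∫ x in a..b, u' x * v x)]

theorem hasDerivAt_rpow_div_one_add {p x : ℝ} (hx : 0 < x) :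
    HasDerivAt (fun y => y ^ p / (1 + y)) (p * x ^ (p - 1) / (1 + x) - x ^ p / (1 + x) ^ 2) x := by
  have h1x : 1 + x ≠ 0 := by positivity
  refine ((hasDerivAt_rpow_const (p := p) (Or.inl hx.ne')).div
    ((hasDerivAt_id x).const_add 1) h1x).congr_deriv ?_
  simp only [id]
  field_simp

theorem abs_rpow_div_one_add_le_one {p x : ℝ} (hp : p ≤ 1) (hx : 1 ≤ x) :
    |x ^ p / (1 + x)| ≤ 1 := by
  have hxp : x ^ p ≤ x := by simpa using rpow_le_rpow_of_exponent_le hx hp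
  rw [abs_of_pos (by positivity), div_le_one (by positivity)]
  linarith

theorem abs_deriv_rpow_div_one_add_le {p x : ℝ} (hx : 1 ≤ x) :
    |p * x ^ (p - 1) / (1 + x) - x ^ p / (1 + x) ^ 2| ≤ (|p| + 1) * x ^ (p - 2) := by
  have hx0 : 0 < x := by linarith
  have hpow : 0 < x ^ (p - 2) := by positivity
  have h1 : x ^ (p - 1) = x ^ (p - 2) * x := by
    rw [← rpow_add_one hx0.ne']; ring_nf
  have h2 : x ^ p = x ^ (p - 2) * x ^ 2 := by
    rw [← rpow_natCast, ← rpow_add hx0]; ring_nf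
  have hA : |p * x ^ (p - 1) / (1 + x)| ≤ |p| * x ^ (p - 2) := by
    rw [abs_div, abs_mul, abs_of_pos (by positivity : 0 < x ^ (p - 1)),
      abs_of_pos (by positivity : 0 < 1 + x), mul_div_assoc]
    gcongr
    rw [div_le_iff₀ (by positivity), h1]
    nlinarith
  have hB : |x ^ p / (1 + x) ^ 2| ≤ x ^ (p - 2) := by
    rw [h2, abs_of_pos (by positivity), div_le_iff₀ (by positivity)]
    nlinarith [mul_nonneg hpow.le hx0.le]
  calc _ ≤ |p * x ^ (p - 1) / (1 + x)| + |x ^ p / (1 + x) ^ 2| := abs_sub _ _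
    _ ≤ (|p| + 1) * x ^ (p - 2) := by linarith

theorem integral_one_rpow_le {r t : ℝ} (hr : r < -1) (ht : 1 ≤ t) :
    ∫ x in (1 : ℝ)..t, x ^ r ≤ -1 / (r + 1) := by
  have h0 : (0 : ℝ) ∉ uIcc 1 t := by
    rw [uIcc_of_le ht]; exact fun h => absurd h.1 (by norm_num)
  rw [integral_rpow (Or.inr ⟨by linarith, h0⟩), one_rpow]
  have ht_pow : 0 ≤ t ^ (r + 1) := rpow_nonneg (by linarith) _
  exact div_le_div_of_nonpos_of_le (by linarith) (by linarith)

theorem hasDerivAt_neg_cos_rpow_div {α x : ℝ} (hα : α ≠ 0) (hx : 0 < x) :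
    HasDerivAt (fun y => -cos (y ^ α) / α) (x ^ (α - 1) * sin (x ^ α)) x := by
  refine ((hasDerivAt_rpow_const (p := α) (Or.inl hx.ne')).cos.neg.div_const α).congr_deriv ?_
  field_simp

theorem intervalIntegrable_deriv_rpow_div_one_add {p a b : ℝ} (ha : 0 < a) (hab : a ≤ b) :
    IntervalIntegrable (fun x => p * x ^ (p - 1) / (1 + x) - x ^ p / (1 + x) ^ 2) volume a b := by
  refine ContinuousOn.intervalIntegrable ?_
  rw [uIcc_of_le hab]
  fun_prop (disch := intro x (hx : x ∈ Icc a b); have : 0 < x := ha.trans_le hx.1; positivity)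

theorem integral_abs_deriv_rpow_div_one_add_le {p t : ℝ} (hp : p < 1) (ht : 1 ≤ t) :
    ∫ x in (1 : ℝ)..t, |p * x ^ (p - 1) / (1 + x) - x ^ p / (1 + x) ^ 2|
      ≤ (|p| + 1) / (1 - p) := by
  calc _ ≤ ∫ x in (1 : ℝ)..t, (|p| + 1) * x ^ (p - 2) := by
        refine integral_mono_on ht (intervalIntegrable_deriv_rpow_div_one_add one_pos ht).abs
          (ContinuousOn.intervalIntegrable ?_) fun x hx => abs_deriv_rpow_div_one_add_le hx.1
        rw [uIcc_of_le ht]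
        fun_prop (disch := intro x (hx : x ∈ Icc 1 t); exact (zero_lt_one.trans_le hx.1).ne')
    _ ≤ (|p| + 1) * (-1 / (p - 2 + 1)) := by
        rw [intervalIntegral.integral_const_mul]
        gcongr
        exact integral_one_rpow_le (by linarith) ht
    _ = (|p| + 1) / (1 - p) := by
        rw [show p - 2 + 1 = -(1 - p) by ring, div_neg, neg_div, neg_neg, mul_one_div]

theorem abs_integral_one_sin_rpow_div_one_add_le {α t : ℝ} (hα : 0 < α) (ht : 1 ≤ t) :
    |∫ s in (1 : ℝ)..t, sin (s ^ α) / (1 + s)| ≤ (2 + (|1 - α| + 1) / α) / α := by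
  have hpos : ∀ s ∈ Icc 1 t, 0 < s := fun s hs => by linarith [hs.1]
  have hfactor : ∫ s in (1 : ℝ)..t, sin (s ^ α) / (1 + s)
      = ∫ s in (1 : ℝ)..t, s ^ (1 - α) / (1 + s) * (s ^ (α - 1) * sin (s ^ α)) := by
    refine integral_congr fun s hs => ?_
    rw [uIcc_of_le ht] at hs
    have : s ^ (1 - α) * s ^ (α - 1) = 1 := by
      rw [← rpow_add (hpos s hs)]; simp
    rw [div_mul_eq_mul_div, ← mul_assoc, this, one_mul]
  have hsin_int : IntervalIntegrable (fun s => s ^ (α - 1) * sin (s ^ α)) volume 1 t := by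
    refine ContinuousOn.intervalIntegrable ?_
    rw [uIcc_of_le ht]
    fun_prop (disch := intro s (hs : s ∈ Icc 1 t); exact (hpos s hs).ne')
  have hvar := integral_abs_deriv_rpow_div_one_add_le (p := 1 - α) (by linarith) ht
  rw [sub_sub_cancel] at hvar
  rw [hfactor]
  refine (abs_integral_mul_deriv_le ht (fun s hs => hasDerivAt_rpow_div_one_add (hpos s hs))
    (fun s hs => hasDerivAt_neg_cos_rpow_div hα.ne' (hpos s hs))
    (intervalIntegrable_deriv_rpow_div_one_add one_pos ht) hsin_int
    (C := 1 / α) fun s _ => ?_).trans ?_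
  · rw [abs_div, abs_neg, abs_of_pos hα]
    exact div_le_div_of_nonneg_right (abs_cos_le_one _) hα.le
  · rw [one_div_mul_eq_div]
    gcongr
    linarith [abs_rpow_div_one_add_le_one (p := 1 - α) (by linarith) le_rfl,
      abs_rpow_div_one_add_le_one (p := 1 - α) (by linarith) ht]

theorem abs_integral_sin_rpow_div_one_add_le_sub {α a b : ℝ} (ha : 0 ≤ a) (hab : a ≤ b) :
    |∫ s in a..b, sin (s ^ α) / (1 + s)| ≤ b - a := by
  have := norm_integral_le_of_norm_le_const (a := a) (b := b) (C := 1)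
    (f := fun s => sin (s ^ α) / (1 + s)) fun s hs => by
      rw [uIoc_of_le hab] at hs
      have h1s : 1 ≤ 1 + s := by linarith [hs.1]
      rw [Real.norm_eq_abs, abs_div, abs_of_pos (by linarith : (0 : ℝ) < 1 + s),
        div_le_one (by linarith)]
      exact (abs_sin_le_one _).trans h1s
  rwa [Real.norm_eq_abs, one_mul, abs_of_nonneg (sub_nonneg.2 hab)] at this

theorem continuousOn_sin_rpow_div_one_add {α : ℝ} (hα : 0 ≤ α) :
    ContinuousOn (fun s => sin (s ^ α) / (1 + s)) (Ici 0) :=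
  (continuous_sin.comp (continuous_rpow_const hα)).continuousOn.div (by fun_prop)
    fun s (hs : 0 ≤ s) => by positivity

theorem exists_abs_integral_sin_rpow_div_one_add_le {α : ℝ} (hα : 0 < α) :
    ∃ M, ∀ t, 0 ≤ t → |∫ s in (0 : ℝ)..t, sin (s ^ α) / (1 + s)| ≤ M := by
  refine ⟨1 + (2 + (|1 - α| + 1) / α) / α, fun t ht => ?_⟩
  have hC : 0 ≤ (2 + (|1 - α| + 1) / α) / α := by positivity
  rcases le_total t 1 with ht1 | ht1
  · linarith [abs_integral_sin_rpow_div_one_add_le_sub (α := α) le_rfl ht]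
  have hint : ∀ a b : ℝ, 0 ≤ a → a ≤ b →
      IntervalIntegrable (fun s => sin (s ^ α) / (1 + s)) volume a b := fun a b ha hab =>
    ((continuousOn_sin_rpow_div_one_add hα.le).mono
      (by rw [uIcc_of_le hab]; exact Icc_subset_Ici_iff hab |>.2 ha)).intervalIntegrable
  rw [← integral_add_adjacent_intervals (hint 0 1 le_rfl zero_le_one) (hint 1 t zero_le_one ht1)]
  refine (abs_add_le _ _).trans ?_
  gcongr
  · simpa using abs_integral_sin_rpow_div_one_add_le_sub (α := α) le_rfl zero_le_one
  · exact abs_integral_one_sin_rpow_div_one_add_le hα ht1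

theorem stmt_10_general (μ₀ α : ℝ) (hα₀ : 0 < α) :
    ∃ M : ℝ, ∀ t : ℝ, 0 < t →
      |∫ s in (0 : ℝ)..t, (μ₀ / (1 + s)) * Real.sin (s ^ α)| ≤ M := by
  obtain ⟨M, hM⟩ := exists_abs_integral_sin_rpow_div_one_add_le hα₀
  refine ⟨|μ₀| * M, fun t ht => ?_⟩
  have hrw : (fun s : ℝ => μ₀ / (1 + s) * sin (s ^ α))
      = fun s => μ₀ * (sin (s ^ α) / (1 + s)) := by
    funext s; ring
  rw [hrw, intervalIntegral.integral_const_mul, abs_mul]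
  exact mul_le_mul_of_nonneg_left (hM t ht.le) (abs_nonneg _)

/-- The oscillating part `σ(t) = (μ₀/(1+t)) sin(t^α)`, `0 < α < 1`, has a
uniformly bounded primitive. -/
theorem stmt_10 (μ₀ α : ℝ) (hμ : 0 < μ₀) (hα₀ : 0 < α) (hα₁ : α < 1) :
    ∃ M : ℝ, ∀ t : ℝ, 0 < t →
      |∫ s in (0 : ℝ)..t, (μ₀ / (1 + s)) * Real.sin (s ^ α)| ≤ M :=
  stmt_10_general μ₀ α hα₀
end
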